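/- arXiv:1709.06034 — 3 statements merged into one kernel-verified Lean document; each statement's English description precedes it below -/
import Mathlib

section
/- Let A be a unital C*-algebra over ℂ and let Q ∈ A be quasinilpotent. Then ‖ |(1+Q)^n|^{1/n} − 1 ‖ → 0 as n → ∞; in particular, 1 + Q has the norm convergence property. -/
/-!
`T = 1 + Q` is invertible, and both `T` and `T⁻¹` have spectrum `{1}`, so by Gelfand's formula
`‖T ^ n‖ ^ (1 / n) → 1` and `‖T⁻¹ ^ n‖ ^ (1 / n) → 1`. By the C*-identity the spectrum of the
positive element `star (T ^ n) * T ^ n` lies in `[‖T⁻¹ ^ n‖⁻², ‖T ^ n‖²]`, hence that of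
`|T ^ n| ^ (1 / n)` lies in `[‖T⁻¹ ^ n‖ ^ (-1 / n), ‖T ^ n‖ ^ (1 / n)]`, an interval shrinking to
`{1}`; for a self-adjoint element this bounds the distance to `1`.
-/

open Filter Topology

/-- The element `|T^n|^{1/n} = ((T^n)^* T^n)^{1/(2n)}`, defined via the continuous
functional calculus. -/
noncomputable def absPowRoot {A : Type*} [CStarAlgebra A] [PartialOrder A] [StarOrderedRing A]
    (T : A) (n : ℕ) : A :=
  CFC.rpow (star (T ^ n) * T ^ n) ((2 * n : ℝ))⁻¹

theorem spectrum.inv_norm_inv_le_norm_of_mem {𝕜 A : Type*} [NormedField 𝕜] [NormedRing A]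
    [NormedAlgebra 𝕜 A] [CompleteSpace A] [NormOneClass A] (u : Aˣ) {x : 𝕜}
    (hx : x ∈ spectrum 𝕜 (u : A)) : ‖(↑u⁻¹ : A)‖⁻¹ ≤ ‖x‖ := by
  have hx0 : x ≠ 0 := by
    rintro rfl
    exact spectrum.zero_notMem 𝕜 u.isUnit hx
  have hinv : x⁻¹ ∈ spectrum 𝕜 (↑u⁻¹ : A) := by
    simpa using (spectrum.inv_mem_iff (r := Units.mk0 x hx0) (a := u)).mp hx
  have := spectrum.norm_le_norm_of_mem hinv
  rw [norm_inv] at this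
  exact inv_le_of_inv_le₀ (norm_pos_iff.mpr hx0) this

theorem spectrum.norm_pow_rpow_one_div_tendsto_toReal_spectralRadius {A : Type*} [NormedRing A]
    [NormedAlgebra ℂ A] [CompleteSpace A] [NormOneClass A] (a : A) :
    Tendsto (fun n : ℕ => ‖a ^ n‖ ^ (1 / n : ℝ)) atTop (𝓝 (spectralRadius ℂ a).toReal) := by
  have hfin : spectralRadius ℂ a ≠ ⊤ :=
    ne_top_of_le_ne_top ENNReal.coe_ne_top (spectrum.spectralRadius_le_nnnorm a)
  refine ((ENNReal.tendsto_toReal hfin).comp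
    (spectrum.pow_norm_pow_one_div_tendsto_nhds_spectralRadius a)).congr fun n => ?_
  exact ENNReal.toReal_ofReal (by positivity)

section CStarAlgebra

variable {A : Type*} [CStarAlgebra A] [PartialOrder A] [StarOrderedRing A]

omit [PartialOrder A] [StarOrderedRing A] in
theorem IsSelfAdjoint.norm_sub_one_le_of_spectrum_subset_Icc {a : A} (ha : IsSelfAdjoint a)
    {lo hi : ℝ} (h : spectrum ℝ a ⊆ Set.Icc lo hi) :
    ‖a - 1‖ ≤ max |hi - 1| |lo - 1| := by
  have heq : a - 1 = cfc (fun x : ℝ => x - 1) a := by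
    rw [cfc_sub _ _ a, cfc_id' ℝ a, cfc_const_one ℝ a]
  rw [heq]
  refine norm_cfc_le (by positivity) fun x hx => ?_
  obtain ⟨hxlo, hxhi⟩ := h hx
  rw [Real.norm_eq_abs, abs_le]
  constructor <;> linarith [le_max_left |hi - 1| |lo - 1|, le_max_right |hi - 1| |lo - 1|,
    le_abs_self (hi - 1), neg_abs_le (lo - 1)]

theorem CFC.spectrum_rpow_subset_Icc {a : A} (ha : 0 ≤ a) {lo hi : ℝ}
    (h : spectrum ℝ a ⊆ Set.Icc lo hi) (hlo : 0 ≤ lo) {y : ℝ} (hy : 0 ≤ y) :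
    spectrum ℝ (a ^ y) ⊆ Set.Icc (lo ^ y) (hi ^ y) := by
  rw [CFC.rpow_eq_cfc_real ha, cfc_map_spectrum (fun x : ℝ => x ^ y) a]
  rintro _ ⟨x, hx, rfl⟩
  obtain ⟨hxlo, hxhi⟩ := h hx
  exact ⟨Real.rpow_le_rpow hlo hxlo hy, Real.rpow_le_rpow (hlo.trans hxlo) hxhi hy⟩

theorem spectrum_star_mul_self_subset_Icc (u : Aˣ) :
    spectrum ℝ (star (u : A) * u) ⊆ Set.Icc (‖(↑u⁻¹ : A)‖ ^ 2)⁻¹ (‖(u : A)‖ ^ 2) := by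
  nontriviality A
  have hpos : 0 ≤ star (u : A) * u := star_mul_self_nonneg _
  set w : Aˣ := star u * u with hw
  have hw_inv : (↑w⁻¹ : A) = ↑u⁻¹ * star (↑u⁻¹ : A) := by
    rw [hw, mul_inv_rev, ← star_inv]; rfl
  intro x hx
  have hx_norm : ‖x‖ = x := Real.norm_of_nonneg (spectrum_nonneg_of_nonneg hpos hx)
  constructor
  · have := spectrum.inv_norm_inv_le_norm_of_mem (𝕜 := ℝ) w hx
    rwa [hw_inv, CStarRing.norm_self_mul_star, hx_norm, ← sq] at this
  · have := spectrum.norm_le_norm_of_mem hx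
    rwa [CStarRing.norm_star_mul_self, hx_norm, ← sq] at this

theorem norm_absPowRoot_sub_one_le (u : Aˣ) (n : ℕ) :
    ‖absPowRoot (u : A) n - 1‖ ≤
      max |‖(u : A) ^ n‖ ^ (1 / n : ℝ) - 1| |(‖(↑u⁻¹ : A) ^ n‖ ^ (1 / n : ℝ))⁻¹ - 1| := by
  have hroot (v : A) : (‖v‖ ^ 2) ^ ((2 * n : ℝ))⁻¹ = ‖v‖ ^ (1 / n : ℝ) := by
    rw [← Real.rpow_natCast, ← Real.rpow_mul (norm_nonneg v)]
    congr 1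
    push_cast
    field_simp
  have hspec := CFC.spectrum_rpow_subset_Icc (star_mul_self_nonneg _)
    (spectrum_star_mul_self_subset_Icc (u ^ n)) (by positivity) (y := ((2 * n : ℝ))⁻¹)
    (by positivity)
  push_cast at hspec
  rw [Real.inv_rpow (by positivity), hroot, hroot] at hspec
  exact IsSelfAdjoint.norm_sub_one_le_of_spectrum_subset_Icc (.of_nonneg CFC.rpow_nonneg) hspec

end CStarAlgebra

/-- If `Q` is a quasinilpotent element of a unital C*-algebra `A`, then
`‖ |(1+Q)^n|^{1/n} - 1 ‖ → 0` as `n → ∞`; in particular `1 + Q` has the norm convergence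
property (the sequence `|(1+Q)^n|^{1/n}` converges in norm). -/
theorem one_add_quasinilpotent_norm_convergence
    {A : Type*} [CStarAlgebra A] [PartialOrder A] [StarOrderedRing A]
    (Q : A) (hQ : spectrum ℂ Q = {0}) :
    Tendsto (fun n : ℕ => ‖absPowRoot (1 + Q) n - 1‖) atTop (𝓝 0) ∧
    ∃ L : A, Tendsto (fun n : ℕ => absPowRoot (1 + Q) n) atTop (𝓝 L) := by
  nontriviality A
  have hσ : spectrum ℂ (1 + Q) = {1} := by
    rw [← map_one (algebraMap ℂ A), ← spectrum.singleton_add_eq, hQ, Set.singleton_add_singleton,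
      add_zero]
  obtain ⟨u, hu⟩ : IsUnit (1 + Q) := by
    simp [← spectrum.zero_notMem_iff ℂ, hσ]
  have hσ_inv : spectrum ℂ (↑u⁻¹ : A) = {1} := by
    rw [← spectrum.map_inv, hu, hσ, Set.inv_singleton, inv_one]
  have hgelfand {a : A} (ha : spectrum ℂ a = {1}) :
      Tendsto (fun n : ℕ => ‖a ^ n‖ ^ (1 / n : ℝ)) atTop (𝓝 1) := by
    simpa [spectralRadius, ha] using spectrum.norm_pow_rpow_one_div_tendsto_toReal_spectralRadius a
  have hbound : Tendsto (fun n : ℕ => max |‖(u : A) ^ n‖ ^ (1 / n : ℝ) - 1|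
      |(‖(↑u⁻¹ : A) ^ n‖ ^ (1 / n : ℝ))⁻¹ - 1|) atTop (𝓝 0) := by
    simpa using (((hgelfand (hu ▸ hσ)).sub_const 1).abs.max
      (((hgelfand hσ_inv).inv₀ one_ne_zero).sub_const 1).abs)
  have hconv : Tendsto (fun n : ℕ => ‖absPowRoot (1 + Q) n - 1‖) atTop (𝓝 0) :=
    squeeze_zero (fun _ => norm_nonneg _) (fun n => hu ▸ norm_absPowRoot_sub_one_le u n) hbound
  exact ⟨hconv, 1, tendsto_iff_norm_sub_tendsto_zero.mpr hconv⟩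
end

section
/- Let A be a unital C*-algebra over ℂ, let T ∈ A, and write B = (T − T*)/(2i) for the imaginary part of T. Let λ ∈ ℂ with Im λ ≠ 0. If ‖B‖ ≤ |Im λ|/2, then λ·1 − T is invertible in A and ‖(λ·1 − T)^{-1}‖ ≤ 2/|Im λ|. -/
/-!
Write `T = ℜ T + i • ℑ T`. The spectrum of the self-adjoint `ℜ T` is real, so it lies at distance
at least `|Im λ|` from `λ`, and the functional calculus gives `‖(λ - ℜ T)⁻¹‖ ≤ 1 / |Im λ|`.
Then `λ - T = (λ - ℜ T) * (1 - (λ - ℜ T)⁻¹ * i • ℑ T)`, where the second factor is `1` minus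
an element of norm at most `1 / 2`; its Neumann series converges, with inverse of norm at most `2`.
-/

open ComplexStarModule

section PerturbationOfUnits

variable {R : Type*} [NormedRing R] [HasSummableGeomSeries R] [NormOneClass R]

theorem Units.norm_inv_oneSub_le (t : R) (ht : ‖t‖ < 1) :
    ‖(↑(Units.oneSub t ht)⁻¹ : R)‖ ≤ (1 - ‖t‖)⁻¹ := by
  show ‖∑' n : ℕ, t ^ n‖ ≤ _
  simpa using tsum_geometric_le_of_norm_lt_one t ht

theorem Units.exists_eq_sub_norm_inv_le (u : Rˣ) (b : R) {M ε : ℝ}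
    (hu : ‖(↑u⁻¹ : R)‖ ≤ M) (hb : ‖b‖ ≤ ε) (hMε : M * ε < 1) :
    ∃ v : Rˣ, (v : R) = u - b ∧ ‖(↑v⁻¹ : R)‖ ≤ M / (1 - M * ε) := by
  have hM : 0 ≤ M := (norm_nonneg _).trans hu
  have ht : ‖(↑u⁻¹ * b : R)‖ ≤ M * ε :=
    (norm_mul_le _ _).trans (mul_le_mul hu hb (norm_nonneg _) hM)
  let w := Units.oneSub (↑u⁻¹ * b) (ht.trans_lt hMε)
  refine ⟨u * w, by simp [w, mul_sub], ?_⟩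
  calc ‖(↑(u * w)⁻¹ : R)‖ ≤ ‖(↑w⁻¹ : R)‖ * ‖(↑u⁻¹ : R)‖ := by
        rw [mul_inv_rev, Units.val_mul]; exact norm_mul_le _ _
    _ ≤ (1 - M * ε)⁻¹ * M := by
        have hw : ‖(↑w⁻¹ : R)‖ ≤ (1 - M * ε)⁻¹ :=
          (Units.norm_inv_oneSub_le _ _).trans (by gcongr)
        gcongr
    _ = M / (1 - M * ε) := by ring

end PerturbationOfUnits

theorem IsSelfAdjoint.exists_eq_algebraMap_sub_norm_inv_le {A : Type*} [CStarAlgebra A]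
    {H : A} (hH : IsSelfAdjoint H) {lam : ℂ} (him : lam.im ≠ 0) :
    ∃ u : Aˣ, (u : A) = algebraMap ℂ A lam - H ∧ ‖(↑u⁻¹ : A)‖ ≤ |lam.im|⁻¹ := by
  have hdist : ∀ z ∈ spectrum ℂ H, |lam.im| ≤ ‖lam - z‖ := fun z hz => by
    simpa [hH.im_eq_zero_of_mem_spectrum hz] using Complex.abs_im_le_norm (lam - z)
  have hne : ∀ z ∈ spectrum ℂ H, lam - z ≠ 0 := fun z hz h0 => by
    have := hdist z hz
    rw [h0, norm_zero] at this
    exact him (abs_nonpos_iff.mp this)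
  refine ⟨cfcUnits (fun z => lam - z) H hne, ?_, ?_⟩
  · rw [val_cfcUnits _ H hne, cfc_sub .., cfc_const lam H, cfc_id' ℂ H]
  · rw [val_inv_cfcUnits _ H hne]
    refine norm_cfc_le (by positivity) fun z hz => ?_
    rw [norm_inv]
    exact inv_anti₀ (abs_pos.mpr him) (hdist z hz)

theorem imaginaryPart_apply_coe_eq_smul_sub {A : Type*} [AddCommGroup A] [Module ℂ A]
    [StarAddMonoid A] [StarModule ℂ A] (a : A) :
    (ℑ a : A) = ((2 * Complex.I)⁻¹ : ℂ) • (a - star a) := by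
  rw [imaginaryPart_apply_coe, ← Complex.coe_smul, smul_smul]
  congr 1
  field_simp
  simp

/-- Let `T` be an element of a unital C*-algebra `A`, and let
`B = (2i)⁻¹ • (T - T*)` be its imaginary part. If `λ ∈ ℂ` with `Im λ ≠ 0` and
`‖B‖ ≤ |Im λ| / 2`, then `λ·1 - T` is invertible with `‖(λ·1 - T)⁻¹‖ ≤ 2 / |Im λ|`. -/
theorem isUnit_smul_one_sub_of_norm_imaginary_part_le
    {A : Type*} [CStarAlgebra A] (T : A) (lam : ℂ) (him : lam.im ≠ 0)
    (hB : ‖((2 * Complex.I)⁻¹ : ℂ) • (T - star T)‖ ≤ |lam.im| / 2) :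
    IsUnit (algebraMap ℂ A lam - T) ∧
    ∃ S : A, (algebraMap ℂ A lam - T) * S = 1 ∧ S * (algebraMap ℂ A lam - T) = 1 ∧
      ‖S‖ ≤ 2 / |lam.im| := by
  obtain _ | _ := subsingleton_or_nontrivial A
  · exact ⟨isUnit_of_subsingleton _, 0, Subsingleton.elim .., Subsingleton.elim ..,
      by rw [norm_zero]; positivity⟩
  obtain ⟨u, hu, hu_inv⟩ := (ℜ T).2.exists_eq_algebraMap_sub_norm_inv_le him
  have hIB : ‖Complex.I • (ℑ T : A)‖ ≤ |lam.im| / 2 := by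
    rwa [norm_smul, Complex.norm_I, one_mul, imaginaryPart_apply_coe_eq_smul_sub]
  obtain ⟨v, hv, hv_inv⟩ := u.exists_eq_sub_norm_inv_le _ hu_inv hIB
    (by field_simp; norm_num)
  have hvT : (v : A) = algebraMap ℂ A lam - T := by
    rw [hv, hu, sub_sub, realPart_add_I_smul_imaginaryPart]
  refine ⟨hvT ▸ v.isUnit, ↑v⁻¹, by simp [← hvT], by simp [← hvT], hv_inv.trans_eq ?_⟩
  field_simp
  norm_num
end

section
/- Let (H_n)_{n≥1} be a sequence of complex Hilbert spaces, let H be their ℓ²-Hilbert space direct sum, and for each n let Q_n ∈ B(H_n) be a nilpotent operator (Q_n^{m_n} = 0 for some m_n ∈ ℕ) with sup_n ‖Q_n‖ < ∞. Let Q ∈ B(H) be the bounded block-diagonal operator determined by (Q x)_n = Q_n x_n for all x ∈ H and all n. Then Q is s.o.t.-quasinilpotent, i.e. ‖ |Q^m|^{1/m} x ‖ → 0 as m → ∞ for every x ∈ H. -/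
open Filter Topology

/-- An operator `Q ∈ B(H)` is s.o.t.-quasinilpotent if `|Q^m|^{1/m} → 0` in the strong
operator topology. -/
def SOTQuasinilpotent {H : Type*} [NormedAddCommGroup H] [InnerProductSpace ℂ H]
    [CompleteSpace H] (Q : H →L[ℂ] H) : Prop :=
  ∀ x : H, Tendsto (fun m : ℕ => ‖absPowRoot Q m x‖) atTop (𝓝 0)

/-!
Vectors with finitely many nonzero coordinates are dense in `lp G 2`, and on each of them `Q^m`
vanishes for large `m` since every `Qn n` is nilpotent. For a self-adjoint `A`, `ker A^k = ker A`,
so `|Q^m|^{1/m}`, whose `2m`-th power is `(Q^m)^* Q^m`, vanishes there as well. Finally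
`‖|Q^m|^{1/m}‖ ≤ ‖Q‖` for `m ≥ 1`, and for an equibounded family of operators the set of vectors
on which it tends to `0` is closed.
-/

theorem IsSelfAdjoint.ker_pow {𝕜 H : Type*} [RCLike 𝕜] [NormedAddCommGroup H]
    [InnerProductSpace 𝕜 H] [CompleteSpace H] {A : H →L[𝕜] H} (hA : IsSelfAdjoint A)
    {n : ℕ} (hn : n ≠ 0) : (A ^ n).ker = A.ker := by
  have hsq : LinearMap.ker ((A : Module.End 𝕜 H) ^ 1) =
      LinearMap.ker ((A : Module.End 𝕜 H) ^ 2) := by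
    have h := A.ker_adjoint_comp_self
    rw [hA.adjoint_eq] at h
    rw [pow_one, pow_two, Module.End.mul_eq_comp]
    exact h.symm
  obtain ⟨m, rfl⟩ := Nat.exists_eq_add_of_le' (Nat.one_le_iff_ne_zero.mpr hn)
  have hstable := Module.End.ker_pow_constant hsq m
  rw [pow_one, add_comm] at hstable
  exact_mod_cast hstable.symm

section CStar

variable {A : Type*} [CStarAlgebra A] [PartialOrder A] [StarOrderedRing A]

lemma absPowRoot_nonneg (T : A) (n : ℕ) : 0 ≤ absPowRoot T n := CFC.rpow_nonneg

lemma absPowRoot_pow_two_mul (T : A) {n : ℕ} (hn : n ≠ 0) :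
    absPowRoot T n ^ (2 * n) = star (T ^ n) * T ^ n := by
  have h2n : ((2 * n : ℕ) : ℝ) ≠ 0 := by positivity
  rw [absPowRoot, CFC.rpow_eq_pow, ← CFC.rpow_natCast _ _ CFC.rpow_nonneg,
    CFC.rpow_rpow_of_exponent_nonneg _ _ _ (by positivity) (by positivity) (star_mul_self_nonneg _),
    ← Nat.cast_ofNat, ← Nat.cast_mul, inv_mul_cancel₀ h2n, CFC.rpow_one _ (star_mul_self_nonneg _)]

lemma nnnorm_absPowRoot_le (T : A) {n : ℕ} (hn : n ≠ 0) : ‖absPowRoot T n‖₊ ≤ ‖T‖₊ := by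
  have h2n : (0 : ℝ) < 2 * n := by positivity
  rw [absPowRoot, CFC.rpow_eq_pow, CFC.nnnorm_rpow _ (inv_pos.mpr h2n) (star_mul_self_nonneg _),
    CStarRing.nnnorm_star_mul_self]
  calc (‖T ^ n‖₊ * ‖T ^ n‖₊) ^ (2 * n : ℝ)⁻¹ ≤ (‖T‖₊ ^ (2 * n)) ^ (2 * n : ℝ)⁻¹ := by
        gcongr
        rw [two_mul, pow_add]
        gcongr <;> exact nnnorm_pow_le' T (Nat.pos_of_ne_zero hn)
    _ = ‖T‖₊ := by
        rw [← NNReal.rpow_natCast, ← NNReal.rpow_mul]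
        push_cast
        rw [mul_inv_cancel₀ h2n.ne', NNReal.rpow_one]

end CStar

lemma absPowRoot_apply_eq_zero {H : Type*} [NormedAddCommGroup H] [InnerProductSpace ℂ H]
    [CompleteSpace H] {T : H →L[ℂ] H} {n : ℕ} (hn : n ≠ 0) {x : H} (hx : (T ^ n) x = 0) :
    absPowRoot T n x = 0 := by
  have hself : IsSelfAdjoint (absPowRoot T n) := (absPowRoot_nonneg T n).isSelfAdjoint
  change x ∈ (absPowRoot T n).ker
  rw [← hself.ker_pow (by positivity : 2 * n ≠ 0), absPowRoot_pow_two_mul T hn]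
  change star (T ^ n) ((T ^ n) x) = 0
  rw [hx, map_zero]

lemma isClosed_setOf_tendsto_zero_of_norm_le {𝕜 E F ι : Type*} [NontriviallyNormedField 𝕜]
    [SeminormedAddCommGroup E] [SeminormedAddCommGroup F] [NormedSpace 𝕜 E] [NormedSpace 𝕜 F]
    {A : ι → E →L[𝕜] F} {C : ℝ} (hA : ∀ i, ‖A i‖ ≤ C) (l : Filter ι) :
    IsClosed {x | Tendsto (fun i => A i x) l (𝓝 0)} := by
  have hbdd : ∃ C, ∀ i, ‖A i‖ ≤ C := ⟨C, hA⟩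
  exact Equicontinuous.isClosed_setOfPred_tendsto
    (((NormedSpace.equicontinuous_TFAE A).out 5 1).mp hbdd) continuous_const

section BlockDiagonal

variable {G : ℕ → Type*} [∀ n, NormedAddCommGroup (G n)] [∀ n, InnerProductSpace ℂ (G n)]
    {Qn : ∀ n, G n →L[ℂ] G n} {Q : lp G 2 →L[ℂ] lp G 2}

lemma blockDiagonal_pow_apply (hQ : ∀ (x : lp G 2) (n : ℕ), (Q x) n = Qn n (x n))
    (j : ℕ) (x : lp G 2) (n : ℕ) : (Q ^ j) x n = (Qn n ^ j) (x n) := by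
  induction j with
  | zero => simp
  | succ j ih =>
    rw [pow_succ', pow_succ']
    change (Q ((Q ^ j) x)) n = Qn n ((Qn n ^ j) (x n))
    rw [hQ, ih]

lemma blockDiagonal_pow_apply_single_eq_zero
    (hQ : ∀ (x : lp G 2) (n : ℕ), (Q x) n = Qn n (x n))
    {i m : ℕ} (hm : Qn i ^ m = 0) (v : G i) : (Q ^ m) (lp.single 2 i v) = 0 := by
  ext n
  rw [blockDiagonal_pow_apply hQ]
  rcases eq_or_ne n i with rfl | hn
  · simp [hm]
  · rw [lp.single_apply_ne 2 i v hn, map_zero]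
    rfl

end BlockDiagonal

theorem blockDiagonal_nilpotent_sotQuasinilpotent_general
    (G : ℕ → Type*) [∀ n, NormedAddCommGroup (G n)] [∀ n, InnerProductSpace ℂ (G n)]
    [∀ n, CompleteSpace (G n)]
    (Qn : ∀ n, G n →L[ℂ] G n) (hnil : ∀ n, IsNilpotent (Qn n))
    (Q : lp G 2 →L[ℂ] lp G 2)
    (hQ : ∀ (x : lp G 2) (n : ℕ), (Q x) n = Qn n (x n)) :
    SOTQuasinilpotent Q := by
  intro x
  -- `absPowRoot Q 0 = 1`; the norm bound `‖absPowRoot Q m‖ ≤ ‖Q‖` needs `m ≠ 0`.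
  rw [← tendsto_add_atTop_iff_nat 1, ← tendsto_zero_iff_norm_tendsto_zero]
  have hclosed := isClosed_setOf_tendsto_zero_of_norm_le
    (A := fun m => absPowRoot Q (m + 1)) (fun m => nnnorm_absPowRoot_le Q m.succ_ne_zero) atTop
  refine hclosed.mem_of_tendsto (lp.hasSum_single ENNReal.ofNat_ne_top x).tendsto_sum_nat
    (Eventually.of_forall fun N => ?_)
  have hsingle : ∀ i ∈ Finset.range N,
      ∀ᶠ m in atTop, absPowRoot Q (m + 1) (lp.single 2 i (x i)) = 0 := fun i _ => by
    obtain ⟨k, hk⟩ := hnil i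
    filter_upwards [eventually_ge_atTop k] with m hm
    exact absPowRoot_apply_eq_zero m.succ_ne_zero <| blockDiagonal_pow_apply_single_eq_zero hQ
      (pow_eq_zero_of_le (by omega) hk) _
  refine tendsto_const_nhds.congr' ?_
  filter_upwards [(eventually_all_finset _).2 hsingle] with m hm
  rw [map_sum, Finset.sum_eq_zero hm]

/-- Let `(G n)` be a sequence of complex Hilbert spaces, let `lp G 2` be their
ℓ²-Hilbert space direct sum, and for each `n` let `Qn n ∈ B(G n)` be nilpotent, with
`sup_n ‖Qn n‖ < ∞`. If `Q` is the bounded block-diagonal operator on `lp G 2` determined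
by `(Q x) n = Qn n (x n)`, then `Q` is s.o.t.-quasinilpotent. -/
theorem blockDiagonal_nilpotent_sotQuasinilpotent
    (G : ℕ → Type*) [∀ n, NormedAddCommGroup (G n)] [∀ n, InnerProductSpace ℂ (G n)]
    [∀ n, CompleteSpace (G n)]
    (Qn : ∀ n, G n →L[ℂ] G n) (hnil : ∀ n, IsNilpotent (Qn n))
    (C : ℝ) (hC : ∀ n, ‖Qn n‖ ≤ C)
    (Q : lp G 2 →L[ℂ] lp G 2)
    (hQ : ∀ (x : lp G 2) (n : ℕ), (Q x) n = Qn n (x n)) :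
    SOTQuasinilpotent Q :=
  blockDiagonal_nilpotent_sotQuasinilpotent_general G Qn hnil Q hQ
end
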